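/- arXiv:1911.08393 — 6 statements merged into one kernel-verified Lean document; each statement's English description precedes it below -/
import Mathlib

section
/- For any equational quasigroup (Q,·,/,\), the operation on Q³ defined by (x₁,x₂,x₃)·(y₁,y₂,y₃) = (y₃/x₂, y₁\x₃, x₁·y₂) makes Q³ a semisymmetric quasigroup (the semisymmetrization QΔ). -/
/-- The semisymmetrization: for an equational quasigroup `Q`, the operation
`(x₁,x₂,x₃)·(y₁,y₂,y₃) = (y₃/x₂, y₁\x₃, x₁·y₂)` makes `Q³` a semisymmetric
quasigroup. -/
theorem stmt_5 {Q : Type*} (mul rdiv ldiv : Q → Q → Q)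
    (SL : ∀ x y, mul x (ldiv x y) = y)
    (SR : ∀ x y, mul (rdiv y x) x = y)
    (IL : ∀ x y, ldiv x (mul x y) = y)
    (IR : ∀ x y, rdiv (mul y x) x = y) :
    let dmul : Q × Q × Q → Q × Q × Q → Q × Q × Q := fun x y =>
      (rdiv y.2.2 x.2.1, ldiv y.1 x.2.2, mul x.1 y.2.1)
    (∀ x, Function.Bijective (dmul x)) ∧
    (∀ y, Function.Bijective (fun x => dmul x y)) ∧
    (∀ x y, dmul x (dmul y x) = y) := by
  intro dmul
  have L1 : ∀ a c, rdiv c (ldiv a c) = a := by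
    intro a c
    nth_rewrite 1 [← SL a c]
    exact IR _ _
  have L2 : ∀ b c, ldiv (rdiv c b) c = b := by
    intro b c
    nth_rewrite 2 [← SR b c]
    exact IL _ _
  refine ⟨?_, ?_, ?_⟩
  · intro x
    refine Function.bijective_iff_has_inverse.mpr
      ⟨fun z => (rdiv x.2.2 z.2.1, ldiv x.1 z.2.2, mul z.1 x.2.1), ?_, ?_⟩
    · intro y
      show (rdiv x.2.2 (ldiv y.1 x.2.2), ldiv x.1 (mul x.1 y.2.1),
            mul (rdiv y.2.2 x.2.1) x.2.1) = y
      rw [L1, IL, SR]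
    · intro z
      show (rdiv (mul z.1 x.2.1) x.2.1, ldiv (rdiv x.2.2 z.2.1) x.2.2,
            mul x.1 (ldiv x.1 z.2.2)) = z
      rw [IR, L2, SL]
  · intro y
    refine Function.bijective_iff_has_inverse.mpr
      ⟨fun z => (rdiv z.2.2 y.2.1, ldiv z.1 y.2.2, mul y.1 z.2.1), ?_, ?_⟩
    · intro x
      show (rdiv (mul x.1 y.2.1) y.2.1, ldiv (rdiv y.2.2 x.2.1) y.2.2,
            mul y.1 (ldiv y.1 x.2.2)) = x
      rw [IR, L2, SL]
    · intro z
      show (rdiv y.2.2 (ldiv z.1 y.2.2), ldiv y.1 (mul y.1 z.2.1),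
            mul (rdiv z.2.2 y.2.1) y.2.1) = z
      rw [L1, IL, SR]
  · intro x y
    show (rdiv (mul y.1 x.2.1) x.2.1, ldiv (rdiv x.2.2 y.2.1) x.2.2,
          mul x.1 (ldiv x.1 y.2.2)) = y
    rw [IR, L2, SL]
end

section
/- Let (f₁,f₂,f₃) be a homotopy of quasigroups Q → Q', i.e., xf₁ · yf₂ = (x·y)f₃ for all x,y ∈ Q. Then the map QΔ → Q'Δ sending (x₁,x₂,x₃) to (x₁f₁, x₂f₂, x₃f₃) is a quasigroup homomorphism of the semisymmetrizations. -/
/-- A homotopy `(f₁,f₂,f₃) : Q → Q'` of quasigroups induces a homomorphism of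
semisymmetrizations `QΔ → Q'Δ`, `(x₁,x₂,x₃) ↦ (x₁f₁, x₂f₂, x₃f₃)`. -/
theorem stmt_6 {Q Q' : Type*}
    (mul rdiv ldiv : Q → Q → Q)
    (SL : ∀ x y, mul x (ldiv x y) = y)
    (SR : ∀ x y, mul (rdiv y x) x = y)
    (IL : ∀ x y, ldiv x (mul x y) = y)
    (IR : ∀ x y, rdiv (mul y x) x = y)
    (mul' rdiv' ldiv' : Q' → Q' → Q')
    (SL' : ∀ x y, mul' x (ldiv' x y) = y)
    (SR' : ∀ x y, mul' (rdiv' y x) x = y)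
    (IL' : ∀ x y, ldiv' x (mul' x y) = y)
    (IR' : ∀ x y, rdiv' (mul' y x) x = y)
    (f₁ f₂ f₃ : Q → Q')
    (htp : ∀ x y, mul' (f₁ x) (f₂ y) = f₃ (mul x y)) :
    let dmul : Q × Q × Q → Q × Q × Q → Q × Q × Q := fun x y =>
      (rdiv y.2.2 x.2.1, ldiv y.1 x.2.2, mul x.1 y.2.1)
    let dmul' : Q' × Q' × Q' → Q' × Q' × Q' → Q' × Q' × Q' := fun x y =>
      (rdiv' y.2.2 x.2.1, ldiv' y.1 x.2.2, mul' x.1 y.2.1)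
    let F : Q × Q × Q → Q' × Q' × Q' := fun x => (f₁ x.1, f₂ x.2.1, f₃ x.2.2)
    ∀ x y, F (dmul x y) = dmul' (F x) (F y) := by
  have hr : ∀ a b, f₁ (rdiv a b) = rdiv' (f₃ a) (f₂ b) := by
    intro a b
    have := htp (rdiv a b) b
    rw [SR] at this
    rw [← this, IR']
  have hl : ∀ a b, f₂ (ldiv a b) = ldiv' (f₁ a) (f₃ b) := by
    intro a b
    have := htp a (ldiv a b)
    rw [SL] at this
    rw [← this, IL']
  intro dmul dmul' F x y
  simp only [dmul, dmul', F, hr, hl, htp]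
end

section
/- Let P be an abelian group and a₁,a₂,a₃ endomorphisms of P. The ternary operation (x₁,x₂,x₃)α = x₁a₁ + x₂a₂ + x₃a₃ makes (P,α) a diagonal algebra (idempotent: (x,x,x)α = x, and diagonal identity: applying α to the three α-values of the rows of a 3×3 matrix equals α of the diagonal) if and only if a₁+a₂+a₃ = 1 and {a₁,a₂,a₃} is a complete set of orthogonal idempotents (aᵢaⱼ = δᵢⱼaᵢ). -/
/-- For an abelian group `P` and endomorphisms `a₁,a₂,a₃`, the ternary
operation `(x₁,x₂,x₃)α = x₁a₁ + x₂a₂ + x₃a₃` makes `P` a diagonal algebra if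
and only if `a₁+a₂+a₃ = 1` and `a₁,a₂,a₃` are orthogonal idempotents. -/
theorem stmt_14 {P : Type*} [AddCommGroup P] (a₁ a₂ a₃ : P →+ P) :
    let α : P → P → P → P := fun x₁ x₂ x₃ => a₁ x₁ + a₂ x₂ + a₃ x₃
    ((∀ x, α x x x = x) ∧
      (∀ x₁₁ x₁₂ x₁₃ x₂₁ x₂₂ x₂₃ x₃₁ x₃₂ x₃₃ : P,
        α (α x₁₁ x₁₂ x₁₃) (α x₂₁ x₂₂ x₂₃) (α x₃₁ x₃₂ x₃₃) = α x₁₁ x₂₂ x₃₃)) ↔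
    (a₁ + a₂ + a₃ = AddMonoidHom.id P ∧
      a₁.comp a₁ = a₁ ∧ a₂.comp a₂ = a₂ ∧ a₃.comp a₃ = a₃ ∧
      a₁.comp a₂ = 0 ∧ a₂.comp a₁ = 0 ∧ a₁.comp a₃ = 0 ∧
      a₃.comp a₁ = 0 ∧ a₂.comp a₃ = 0 ∧ a₃.comp a₂ = 0) := by
  intro α
  constructor
  · rintro ⟨h1, h2⟩
    refine ⟨?_, ?_, ?_, ?_, ?_, ?_, ?_, ?_, ?_, ?_⟩
    · ext x; simpa [α] using h1 x
    · ext x; simpa [α] using h2 x 0 0 0 0 0 0 0 0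
    · ext x; simpa [α] using h2 0 0 0 0 x 0 0 0 0
    · ext x; simpa [α] using h2 0 0 0 0 0 0 0 0 x
    · ext x; simpa [α] using h2 0 x 0 0 0 0 0 0 0
    · ext x; simpa [α] using h2 0 0 0 x 0 0 0 0 0
    · ext x; simpa [α] using h2 0 0 x 0 0 0 0 0 0
    · ext x; simpa [α] using h2 0 0 0 0 0 0 x 0 0
    · ext x; simpa [α] using h2 0 0 0 0 0 x 0 0 0
    · ext x; simpa [α] using h2 0 0 0 0 0 0 0 x 0
  · rintro ⟨hsum, h11, h22, h33, h12, h21, h13, h31, h23, h32⟩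
    have hs : ∀ x : P, a₁ x + a₂ x + a₃ x = x := fun x =>
      congrArg (fun f => f x) hsum
    have e11 : ∀ x : P, a₁ (a₁ x) = a₁ x := fun x => congrArg (fun f => f x) h11
    have e22 : ∀ x : P, a₂ (a₂ x) = a₂ x := fun x => congrArg (fun f => f x) h22
    have e33 : ∀ x : P, a₃ (a₃ x) = a₃ x := fun x => congrArg (fun f => f x) h33
    have e12 : ∀ x : P, a₁ (a₂ x) = 0 := fun x => congrArg (fun f => f x) h12
    have e21 : ∀ x : P, a₂ (a₁ x) = 0 := fun x => congrArg (fun f => f x) h21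
    have e13 : ∀ x : P, a₁ (a₃ x) = 0 := fun x => congrArg (fun f => f x) h13
    have e31 : ∀ x : P, a₃ (a₁ x) = 0 := fun x => congrArg (fun f => f x) h31
    have e23 : ∀ x : P, a₂ (a₃ x) = 0 := fun x => congrArg (fun f => f x) h23
    have e32 : ∀ x : P, a₃ (a₂ x) = 0 := fun x => congrArg (fun f => f x) h32
    constructor
    · exact hs
    · intro x₁₁ x₁₂ x₁₃ x₂₁ x₂₂ x₂₃ x₃₁ x₃₂ x₃₃
      simp only [α, map_add, e11, e22, e33, e12, e21, e13, e31, e23, e32]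
      abel
end

section
/- Let P be an abelian group with endomorphisms ρ,λ,a₁,a₂,a₃ such that x·y = xρ + yλ and (x₁,x₂,x₃)α = x₁a₁+x₂a₂+x₃a₃. Then (P,·,α) is a semisymmetrized algebra if and only if {a₁,a₂,a₃} is a complete set of orthogonal idempotents, ρλ = λρ = 1 = -ρ³, and the conjugation relations a₁ = ρ⁻¹a₂ρ, a₂ = ρ⁻¹a₃ρ, a₃ = ρ⁻¹a₁ρ hold in End(P). -/
/-- Theorem (linear semisymmetrized algebras): for an abelian group `P` with
endomorphisms `ρ,λ,a₁,a₂,a₃`, the operations `x·y = xρ + yλ` and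
`(x₁,x₂,x₃)α = x₁a₁ + x₂a₂ + x₃a₃` make `(P,·,α)` a semisymmetrized algebra
if and only if `{a₁,a₂,a₃}` is a complete set of orthogonal idempotents,
`ρλ = λρ = 1 = -ρ³`, and the conjugation relations hold. -/
theorem stmt_15 {P : Type*} [AddCommGroup P] (ρ lam a₁ a₂ a₃ : P →+ P) :
    let mul : P → P → P := fun x y => ρ x + lam y
    let α : P → P → P → P := fun x₁ x₂ x₃ => a₁ x₁ + a₂ x₂ + a₃ x₃
    -- semisymmetrized algebra conditions:
    ((∀ x, Function.Bijective (mul x)) ∧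
     (∀ y, Function.Bijective (fun x => mul x y)) ∧
     (∀ x y, mul x (mul y x) = y) ∧
     (∀ x, α x x x = x) ∧
     (∀ x₁₁ x₁₂ x₁₃ x₂₁ x₂₂ x₂₃ x₃₁ x₃₂ x₃₃ : P,
        α (α x₁₁ x₁₂ x₁₃) (α x₂₁ x₂₂ x₂₃) (α x₃₁ x₃₂ x₃₃) = α x₁₁ x₂₂ x₃₃) ∧
     (∀ x₁ x₂ x₃ y₁ y₂ y₃ : P,
        α (mul x₁ y₁) (mul x₂ y₂) (mul x₃ y₃) =
          mul (α x₃ x₁ x₂) (α y₂ y₃ y₁))) ↔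
    -- linear-algebraic conditions:
    (a₁ + a₂ + a₃ = AddMonoidHom.id P ∧
     a₁.comp a₁ = a₁ ∧ a₂.comp a₂ = a₂ ∧ a₃.comp a₃ = a₃ ∧
     a₁.comp a₂ = 0 ∧ a₂.comp a₁ = 0 ∧ a₁.comp a₃ = 0 ∧
     a₃.comp a₁ = 0 ∧ a₂.comp a₃ = 0 ∧ a₃.comp a₂ = 0 ∧
     ρ.comp lam = AddMonoidHom.id P ∧ lam.comp ρ = AddMonoidHom.id P ∧
     ρ.comp (ρ.comp ρ) = -AddMonoidHom.id P ∧
     a₁.comp ρ = ρ.comp a₂ ∧ a₂.comp ρ = ρ.comp a₃ ∧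
     a₃.comp ρ = ρ.comp a₁) := by
  intro mul α
  constructor
  · rintro ⟨hL, hR, hss, hid, hdiag, hcomp⟩
    have hlr : ∀ y, lam (ρ y) = y := by
      intro y; have := hss 0 y; simpa [mul] using this
    have hrbij : Function.Bijective ρ := by
      have := hR 0; simpa [mul] using this
    have hrl : ∀ y, ρ (lam y) = y := by
      intro y
      obtain ⟨z, rfl⟩ := hrbij.2 y
      rw [hlr]
    have hll : ∀ x, lam (lam x) = -ρ x := by
      intro x
      have h := hss x 0
      simp only [mul, map_zero, zero_add, add_zero] at h
      exact (neg_eq_of_add_eq_zero_right h).symm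
    have hr3 : ∀ x, ρ (ρ (ρ x)) = -x := by
      intro x
      have h1 : ρ (ρ (lam (lam x))) = x := by rw [hrl, hrl]
      rw [hll, map_neg, map_neg] at h1
      exact neg_eq_iff_eq_neg.mp h1
    have e11 : ∀ x, a₁ (a₁ x) = a₁ x := by
      intro x; have := hdiag x 0 0 0 0 0 0 0 0; simpa [α] using this
    have e12 : ∀ x, a₁ (a₂ x) = 0 := by
      intro x; have := hdiag 0 x 0 0 0 0 0 0 0; simpa [α] using this
    have e13 : ∀ x, a₁ (a₃ x) = 0 := by
      intro x; have := hdiag 0 0 x 0 0 0 0 0 0; simpa [α] using this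
    have e21 : ∀ x, a₂ (a₁ x) = 0 := by
      intro x; have := hdiag 0 0 0 x 0 0 0 0 0; simpa [α] using this
    have e22 : ∀ x, a₂ (a₂ x) = a₂ x := by
      intro x; have := hdiag 0 0 0 0 x 0 0 0 0; simpa [α] using this
    have e23 : ∀ x, a₂ (a₃ x) = 0 := by
      intro x; have := hdiag 0 0 0 0 0 x 0 0 0; simpa [α] using this
    have e31 : ∀ x, a₃ (a₁ x) = 0 := by
      intro x; have := hdiag 0 0 0 0 0 0 x 0 0; simpa [α] using this
    have e32 : ∀ x, a₃ (a₂ x) = 0 := by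
      intro x; have := hdiag 0 0 0 0 0 0 0 x 0; simpa [α] using this
    have e33 : ∀ x, a₃ (a₃ x) = a₃ x := by
      intro x; have := hdiag 0 0 0 0 0 0 0 0 x; simpa [α] using this
    have pc1 : ∀ x, a₁ (ρ x) = ρ (a₂ x) := by
      intro x; have := hcomp x 0 0 0 0 0; simpa [mul, α] using this
    have pc2 : ∀ x, a₂ (ρ x) = ρ (a₃ x) := by
      intro x; have := hcomp 0 x 0 0 0 0; simpa [mul, α] using this
    have pc3 : ∀ x, a₃ (ρ x) = ρ (a₁ x) := by
      intro x; have := hcomp 0 0 x 0 0 0; simpa [mul, α] using this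
    refine ⟨?_, ?_, ?_, ?_, ?_, ?_, ?_, ?_, ?_, ?_, ?_, ?_, ?_, ?_, ?_, ?_⟩ <;>
      ext x
    · have := hid x; simpa [α] using this
    · exact e11 x
    · exact e22 x
    · exact e33 x
    · exact e12 x
    · exact e21 x
    · exact e13 x
    · exact e31 x
    · exact e23 x
    · exact e32 x
    · exact hrl x
    · exact hlr x
    · simpa using hr3 x
    · exact pc1 x
    · exact pc2 x
    · exact pc3 x
  · rintro ⟨hsum, h11, h22, h33, h12, h21, h13, h31, h23, h32, hrl, hlr, hr3, hc1, hc2, hc3⟩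
    have sum' : ∀ x, a₁ x + a₂ x + a₃ x = x := fun x => DFunLike.congr_fun hsum x
    have e11 : ∀ x, a₁ (a₁ x) = a₁ x := fun x => DFunLike.congr_fun h11 x
    have e22 : ∀ x, a₂ (a₂ x) = a₂ x := fun x => DFunLike.congr_fun h22 x
    have e33 : ∀ x, a₃ (a₃ x) = a₃ x := fun x => DFunLike.congr_fun h33 x
    have e12 : ∀ x, a₁ (a₂ x) = 0 := fun x => DFunLike.congr_fun h12 x
    have e21 : ∀ x, a₂ (a₁ x) = 0 := fun x => DFunLike.congr_fun h21 x
    have e13 : ∀ x, a₁ (a₃ x) = 0 := fun x => DFunLike.congr_fun h13 x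
    have e31 : ∀ x, a₃ (a₁ x) = 0 := fun x => DFunLike.congr_fun h31 x
    have e23 : ∀ x, a₂ (a₃ x) = 0 := fun x => DFunLike.congr_fun h23 x
    have e32 : ∀ x, a₃ (a₂ x) = 0 := fun x => DFunLike.congr_fun h32 x
    have prl : ∀ x, ρ (lam x) = x := fun x => DFunLike.congr_fun hrl x
    have plr : ∀ x, lam (ρ x) = x := fun x => DFunLike.congr_fun hlr x
    have pr3 : ∀ x, ρ (ρ (ρ x)) = -x := fun x => DFunLike.congr_fun hr3 x
    have pc1 : ∀ x, a₁ (ρ x) = ρ (a₂ x) := fun x => DFunLike.congr_fun hc1 x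
    have pc2 : ∀ x, a₂ (ρ x) = ρ (a₃ x) := fun x => DFunLike.congr_fun hc2 x
    have pc3 : ∀ x, a₃ (ρ x) = ρ (a₁ x) := fun x => DFunLike.congr_fun hc3 x
    have pll : ∀ x, lam (lam x) = -ρ x := by
      intro x
      have h := pr3 (-x)
      rw [neg_neg] at h
      calc lam (lam x) = lam (lam (ρ (ρ (ρ (-x))))) := by rw [h]
        _ = ρ (-x) := by rw [plr, plr]
        _ = -ρ x := map_neg ρ x
    have pl1 : ∀ y, a₁ (lam y) = lam (a₃ y) := by
      intro y
      calc a₁ (lam y) = lam (ρ (a₁ (lam y))) := (plr _).symm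
        _ = lam (a₃ (ρ (lam y))) := by rw [pc3]
        _ = lam (a₃ y) := by rw [prl]
    have pl2 : ∀ y, a₂ (lam y) = lam (a₁ y) := by
      intro y
      calc a₂ (lam y) = lam (ρ (a₂ (lam y))) := (plr _).symm
        _ = lam (a₁ (ρ (lam y))) := by rw [pc1]
        _ = lam (a₁ y) := by rw [prl]
    have pl3 : ∀ y, a₃ (lam y) = lam (a₂ y) := by
      intro y
      calc a₃ (lam y) = lam (ρ (a₃ (lam y))) := (plr _).symm
        _ = lam (a₂ (ρ (lam y))) := by rw [pc2]
        _ = lam (a₂ y) := by rw [prl]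
    refine ⟨?_, ?_, ?_, ?_, ?_, ?_⟩
    · intro x
      refine Function.bijective_iff_has_inverse.mpr ⟨fun z => ρ (z - ρ x), fun y => ?_, fun z => ?_⟩
      · simp only [mul, add_sub_cancel_left, prl]
      · simp only [mul, map_sub, plr]
        abel
    · intro y
      refine Function.bijective_iff_has_inverse.mpr ⟨fun z => lam (z - lam y), fun x => ?_, fun z => ?_⟩
      · simp only [mul, add_sub_cancel_right, plr]
      · simp only [mul, map_sub, prl]
        abel
    · intro x y
      simp only [mul, map_add, plr, pll]
      abel
    · intro x
      simp only [α]
      exact sum' x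
    · intro x₁₁ x₁₂ x₁₃ x₂₁ x₂₂ x₂₃ x₃₁ x₃₂ x₃₃
      simp only [α, map_add, e11, e12, e13, e21, e22, e23, e31, e32, e33,
        add_zero, zero_add]
    · intro x₁ x₂ x₃ y₁ y₂ y₃
      simp only [mul, α, map_add, pc1, pc2, pc3, pl1, pl2, pl3]
      abel
end

section
/- Let S₁,S₂,S₃ be abelian groups with isomorphisms θ₁: S₁→S₃, θ₂: S₂→S₁, θ₃: S₃→S₂ satisfying θ₁θ₃θ₂ = -1 on S₁ (composing left to right). Then the operations x₁·y₂ = x₁θ₁ + y₂θ₃⁻¹ ∈ S₃ (multiplication S₁×S₂→S₃), y₃/x₂ = y₃θ₁⁻¹ + x₂θ₂ ∈ S₁ (right division S₃×S₂→S₁), and y₁\x₃ = y₁θ₂⁻¹ + x₃θ₃ ∈ S₂ (left division S₁×S₃→S₂) define a reversible automaton of quasigroup type on (S₁,S₂,S₃). -/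
/-- Abelian groups `S₁,S₂,S₃` with isomorphisms `θ₁: S₁→S₃`, `θ₂: S₂→S₁`,
`θ₃: S₃→S₂` satisfying `θ₁θ₃θ₂ = -1` (composing left to right) yield a
reversible automaton of quasigroup type via the indicated operations. -/
theorem stmt_16 {S₁ S₂ S₃ : Type*}
    [AddCommGroup S₁] [AddCommGroup S₂] [AddCommGroup S₃]
    (θ₁ : S₁ ≃+ S₃) (θ₂ : S₂ ≃+ S₁) (θ₃ : S₃ ≃+ S₂)
    (h : ∀ x : S₁, θ₂ (θ₃ (θ₁ x)) = -x) :
    let μ : S₁ → S₂ → S₃ := fun x₁ y₂ => θ₁ x₁ + θ₃.symm y₂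
    let ρ : S₃ → S₂ → S₁ := fun y₃ x₂ => θ₁.symm y₃ + θ₂ x₂
    let lam : S₁ → S₃ → S₂ := fun y₁ x₃ => θ₂.symm y₁ + θ₃ x₃
    (∀ x₁ x₂, lam x₁ (μ x₁ x₂) = x₂) ∧
    (∀ x₁ x₂, ρ (μ x₁ x₂) x₂ = x₁) ∧
    (∀ x₁ x₃, μ x₁ (lam x₁ x₃) = x₃) ∧
    (∀ x₃ x₂, μ (ρ x₃ x₂) x₂ = x₃) := by
  intro μ ρ lam
  have h1 : ∀ x : S₁, θ₃ (θ₁ x) = θ₂.symm (-x) := by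
    intro x; rw [← h x, θ₂.symm_apply_apply]
  have h2 : ∀ y : S₂, θ₃.symm y = θ₁ (-(θ₂ y)) := by
    intro y
    have := h1 (-(θ₂ y))
    rw [neg_neg, θ₂.symm_apply_apply] at this
    exact θ₃.symm_apply_eq.mpr this.symm
  have h3 : ∀ z : S₃, θ₁ (θ₂ (θ₃ z)) = -z := by
    intro z
    have := congrArg θ₁ (h (θ₁.symm z))
    rwa [map_neg, θ₁.apply_symm_apply] at this
  refine ⟨fun x₁ x₂ => ?_, fun x₁ x₂ => ?_, fun x₁ x₃ => ?_, fun x₃ x₂ => ?_⟩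
  · simp only [μ, lam, map_add, h1, h2, map_neg, θ₃.apply_symm_apply,
      θ₂.symm_apply_apply, map_neg]
    abel
  · simp only [μ, ρ, map_add, h2, θ₁.symm_apply_apply, map_neg]
    abel
  · simp only [μ, lam, map_add, h2, map_neg, θ₂.apply_symm_apply, h3]
    abel
  · simp only [μ, ρ, map_add, h2, θ₁.apply_symm_apply, map_neg]
    abel
end

section
/- Let M be a right module over a ring S containing invertible elements X₁,X₂,X₃ with X₃X₂X₁ = X₂X₁X₃ = X₁X₃X₂ = -1. Define on M: x·y = xX₂ + yX₁⁻¹, x/y = xX₂⁻¹ + yX₃, x\y = xX₃⁻¹ + yX₁. Then (M,·,/,\) is an equational quasigroup with idempotent element 0 (i.e., 0·0 = 0), and the identities x·(x\y)=y, (y/x)·x=y, x\(x·y)=y, (y·x)/x=y hold. -/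
/-- A right module `M` over a ring `S` with units `X₁,X₂,X₃` satisfying the
cyclic relations `X₃X₂X₁ = X₂X₁X₃ = X₁X₃X₂ = -1` becomes an equational
quasigroup (indeed a pique, with idempotent `0`) under
`x·y = xX₂ + yX₁⁻¹`, `x/y = xX₂⁻¹ + yX₃`, `x\y = xX₃⁻¹ + yX₁`. -/
theorem stmt_18 {S : Type*} [Ring S] {M : Type*} [AddCommGroup M]
    [Module Sᵐᵒᵖ M] (X₁ X₂ X₃ : Sˣ)
    (h1 : (X₃ : S) * X₂ * X₁ = -1)
    (h2 : (X₂ : S) * X₁ * X₃ = -1)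
    (h3 : (X₁ : S) * X₃ * X₂ = -1) :
    let act : S → M → M := fun s x => MulOpposite.op s • x
    let mul : M → M → M := fun x y => act (X₂ : S) x + act ((X₁⁻¹ : Sˣ) : S) y
    let rdiv : M → M → M := fun x y => act ((X₂⁻¹ : Sˣ) : S) x + act (X₃ : S) y
    let ldiv : M → M → M := fun x y => act ((X₃⁻¹ : Sˣ) : S) x + act (X₁ : S) y
    mul 0 0 = 0 ∧
    (∀ x y, mul x (ldiv x y) = y) ∧
    (∀ x y, mul (rdiv y x) x = y) ∧
    (∀ x y, ldiv x (mul x y) = y) ∧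
    (∀ x y, rdiv (mul y x) x = y) := by
  intro act mul rdiv ldiv
  -- ring facts
  have k3 : ((X₃⁻¹ : Sˣ) : S) * ((X₁⁻¹ : Sˣ) : S) = -(X₂ : S) := by
    have : ((X₃⁻¹ : Sˣ) : S) * (((X₁⁻¹ : Sˣ) : S) * ((X₁ : S) * X₃ * X₂))
        = ((X₃⁻¹ : Sˣ) : S) * (((X₁⁻¹ : Sˣ) : S) * (-1)) := by rw [h3]
    calc ((X₃⁻¹ : Sˣ) : S) * ((X₁⁻¹ : Sˣ) : S)
        = -(((X₃⁻¹ : Sˣ) : S) * (((X₁⁻¹ : Sˣ) : S) * ((X₁ : S) * X₃ * X₂))) := by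
          rw [this]; noncomm_ring
      _ = -(X₂ : S) := by
          rw [show ((X₁ : S) * X₃ * X₂) = (X₁ : S) * ((X₃ : S) * X₂) by noncomm_ring,
            ← mul_assoc ((X₁⁻¹ : Sˣ) : S), Units.inv_mul, one_mul,
            ← mul_assoc ((X₃⁻¹ : Sˣ) : S), Units.inv_mul, one_mul]
  have k1 : (X₃ : S) * (X₂ : S) = -((X₁⁻¹ : Sˣ) : S) := by
    have : ((X₃ : S) * X₂ * X₁) * ((X₁⁻¹ : Sˣ) : S) = (-1) * ((X₁⁻¹ : Sˣ) : S) := by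
      rw [h1]
    calc (X₃ : S) * (X₂ : S)
        = ((X₃ : S) * X₂ * X₁) * ((X₁⁻¹ : Sˣ) : S) := by
          rw [mul_assoc, Units.mul_inv, mul_one]
      _ = -((X₁⁻¹ : Sˣ) : S) := by rw [this]; noncomm_ring
  have k2 : (X₂ : S) * (X₁ : S) = -((X₃⁻¹ : Sˣ) : S) := by
    have : ((X₂ : S) * X₁ * X₃) * ((X₃⁻¹ : Sˣ) : S) = (-1) * ((X₃⁻¹ : Sˣ) : S) := by
      rw [h2]
    calc (X₂ : S) * (X₁ : S)
        = ((X₂ : S) * X₁ * X₃) * ((X₃⁻¹ : Sˣ) : S) := by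
          rw [mul_assoc, Units.mul_inv, mul_one]
      _ = -((X₃⁻¹ : Sˣ) : S) := by rw [this]; noncomm_ring
  have k4 : ((X₁⁻¹ : Sˣ) : S) * ((X₂⁻¹ : Sˣ) : S) = -(X₃ : S) := by
    have ha : (X₂ : S) * X₁ * (-(X₃ : S)) = 1 := by
      rw [show (X₂ : S) * X₁ * (-(X₃ : S)) = -((X₂ : S) * X₁ * X₃) by noncomm_ring, h2]
      simp
    calc ((X₁⁻¹ : Sˣ) : S) * ((X₂⁻¹ : Sˣ) : S)
        = ((X₁⁻¹ : Sˣ) : S) * ((X₂⁻¹ : Sˣ) : S) * ((X₂ : S) * X₁ * (-(X₃ : S))) := by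
          rw [ha, mul_one]
      _ = ((X₁⁻¹ : Sˣ) : S) * (((X₂⁻¹ : Sˣ) : S) * (X₂ : S)) * (X₁ : S) * (-(X₃ : S)) := by
          noncomm_ring
      _ = -(X₃ : S) := by rw [Units.inv_mul, mul_one, Units.inv_mul, one_mul]
  have hact : ∀ (s t : S) (x : M), act s (act t x) = act (t * s) x := by
    intro s t x
    simp only [act, smul_smul, ← MulOpposite.op_mul]
  refine ⟨by simp [mul, act], ?_, ?_, ?_, ?_⟩
  · intro x y
    show act (X₂ : S) x + act ((X₁⁻¹ : Sˣ) : S)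
        (act ((X₃⁻¹ : Sˣ) : S) x + act (X₁ : S) y) = y
    simp only [act, smul_add, smul_smul, ← MulOpposite.op_mul, k3, Units.mul_inv,
      MulOpposite.op_neg, MulOpposite.op_one, neg_smul, one_smul]
    abel
  · intro x y
    show act (X₂ : S) (act ((X₂⁻¹ : Sˣ) : S) y + act (X₃ : S) x)
        + act ((X₁⁻¹ : Sˣ) : S) x = y
    simp only [act, smul_add, smul_smul, ← MulOpposite.op_mul, k1, Units.inv_mul,
      MulOpposite.op_neg, MulOpposite.op_one, neg_smul, one_smul]
    abel
  · intro x y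
    show act ((X₃⁻¹ : Sˣ) : S) x
        + act (X₁ : S) (act (X₂ : S) x + act ((X₁⁻¹ : Sˣ) : S) y) = y
    simp only [act, smul_add, smul_smul, ← MulOpposite.op_mul, k2, Units.inv_mul,
      MulOpposite.op_neg, MulOpposite.op_one, neg_smul, one_smul]
    abel
  · intro x y
    show act ((X₂⁻¹ : Sˣ) : S) (act (X₂ : S) y + act ((X₁⁻¹ : Sˣ) : S) x)
        + act (X₃ : S) x = y
    simp only [act, smul_add, smul_smul, ← MulOpposite.op_mul, k4, Units.mul_inv,
      MulOpposite.op_neg, MulOpposite.op_one, neg_smul, one_smul]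
    abel
end
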